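/- Let m, n be positive even integers, M a perfect matching of T_{m,n}, C a directed cycle in D_{m,n}(M), and M' = M △ U(C). Then for every row index i, M and M' have the same number of horizontal edges in row i, and for every column index j, M and M' have the same number of vertical edges in column j. -/
import Mathlib


/-- Vertex set of the toroidal grid: `ZMod m × ZMod n`. -/
abbrev TorV (m n : ℕ) := ZMod m × ZMod n

/-- Adjacency in the toroidal grid `T_{m,n}`: equal in one coordinate,
differing by exactly 1 (mod `m` or `n`) in the other. -/
def torAdj (m n : ℕ) (a b : TorV m n) : Prop :=
  (a.1 = b.1 ∧ (a.2 = b.2 + 1 ∨ b.2 = a.2 + 1)) ∨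
  (a.2 = b.2 ∧ (a.1 = b.1 + 1 ∨ b.1 = a.1 + 1))

/-- `M` is a perfect matching of `T_{m,n}`: every element is an edge of the grid,
and every vertex belongs to exactly one element of `M`. -/
def IsPM (m n : ℕ) (M : Finset (Sym2 (TorV m n))) : Prop :=
  (∀ e ∈ M, ∀ a b : TorV m n, e = s(a, b) → torAdj m n a b) ∧
  ∀ v : TorV m n, ∃! e, e ∈ M ∧ v ∈ e

/-- A vertex `(i,j)` is black when `i + j` is even. -/
def IsBlack {m n : ℕ} (v : TorV m n) : Prop := Even (v.1.val + v.2.val)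

/-- `u`, `v`, `w` lie in a common row or a common column. -/
def Collin {m n : ℕ} (u v w : TorV m n) : Prop :=
  (u.1 = v.1 ∧ v.1 = w.1) ∨ (u.2 = v.2 ∧ v.2 = w.2)

/-- The arc relation of the digraph `D_{m,n}(M)`: a black vertex points along its
matching edge; a white vertex `v` with matching edge `uv` points to the neighbor `w`
with `u,v,w` collinear and `vw ∉ M`. -/
def dArc (m n : ℕ) (M : Finset (Sym2 (TorV m n))) (v w : TorV m n) : Prop :=
  (IsBlack v ∧ torAdj m n v w ∧ s(v, w) ∈ M) ∨
  (¬ IsBlack v ∧ torAdj m n v w ∧ s(v, w) ∉ M ∧ ∃ u, s(u, v) ∈ M ∧ Collin u v w)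

/-- A directed cycle of `D_{m,n}(M)`, given by a `k`-periodic sequence of distinct
vertices following arcs of the digraph. -/
def IsDiCycle (m n : ℕ) (M : Finset (Sym2 (TorV m n))) (k : ℕ) (f : ℕ → TorV m n) : Prop :=
  0 < k ∧ (∀ i < k, ∀ j < k, f i = f j → i = j) ∧
  (∀ i, f (i + k) = f i) ∧ ∀ i, dArc m n M (f i) (f (i + 1))

/-- The underlying undirected edge set `U(C)` of a directed cycle. -/
def cycEdges {m n : ℕ} (k : ℕ) (f : ℕ → TorV m n) : Finset (Sym2 (TorV m n)) :=
  (Finset.range k).image (fun i => s(f i, f (i + 1)))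

/-- The vertex set of a directed cycle. -/
def cycVerts {m n : ℕ} (k : ℕ) (f : ℕ → TorV m n) : Finset (TorV m n) :=
  (Finset.range k).image f

/-- The layer `A` of wrap-around vertical edges, between rows `m-1` and `0`. -/
def layerA (m n : ℕ) [NeZero n] : Finset (Sym2 (TorV m n)) :=
  Finset.univ.image (fun j : ZMod n => s(((0 : ZMod m), j), ((-1 : ZMod m), j)))

/-- The layer `B` of wrap-around horizontal edges, between columns `n-1` and `0`. -/
def layerB (m n : ℕ) [NeZero m] : Finset (Sym2 (TorV m n)) :=
  Finset.univ.image (fun i : ZMod m => s((i, (0 : ZMod n)), (i, (-1 : ZMod n))))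

/-- The horizontal edges of row `i`. -/
def rowEdges (m n : ℕ) [NeZero n] (i : ZMod m) : Finset (Sym2 (TorV m n)) :=
  Finset.univ.image (fun j : ZMod n => s((i, j), (i, j + 1)))

/-- The vertical edges of column `j`. -/
def colEdges (m n : ℕ) [NeZero m] (j : ZMod n) : Finset (Sym2 (TorV m n)) :=
  Finset.univ.image (fun i : ZMod m => s((i, j), (i + 1, j)))

open scoped symmDiff

set_option linter.unusedSectionVars false

section helpers

variable {m n : ℕ} [NeZero m] [NeZero n]

lemma zmod_one_ne_zero {p : ℕ} (hp : 2 ≤ p) : (1 : ZMod p) ≠ 0 := by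
  haveI : Fact (1 < p) := ⟨hp⟩
  exact one_ne_zero

lemma zmod_self_ne_add_one {p : ℕ} (hp : 2 ≤ p) (x : ZMod p) : ¬ x = x + 1 := fun h =>
  zmod_one_ne_zero hp (left_eq_add.mp h)

lemma torAdj_ne (hm2 : 2 ≤ m) (hn2 : 2 ≤ n) {a b : TorV m n} (h : torAdj m n a b) : a ≠ b := by
  rintro rfl
  rcases h with ⟨-, h | h⟩ | ⟨-, h | h⟩
  · exact zmod_self_ne_add_one hn2 _ h
  · exact zmod_self_ne_add_one hn2 _ h
  · exact zmod_self_ne_add_one hm2 _ h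
  · exact zmod_self_ne_add_one hm2 _ h

lemma val_add_one_mod_two {p : ℕ} [NeZero p] (hp : Even p) (hp2 : 2 ≤ p) (x : ZMod p) :
    (x + 1).val % 2 = (x.val + 1) % 2 := by
  have h1 : (x + 1).val = (x.val + 1) % p := by
    rw [ZMod.val_add, ZMod.val_one_eq_one_mod, Nat.mod_eq_of_lt hp2]
  rw [h1, Nat.mod_mod_of_dvd _ hp.two_dvd]

lemma torAdj_black (hm : Even m) (hn : Even n) (hm2 : 2 ≤ m) (hn2 : 2 ≤ n)
    {a b : TorV m n} (h : torAdj m n a b) : (IsBlack a ↔ ¬ IsBlack b) := by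
  simp only [IsBlack, Nat.even_iff]
  rcases h with ⟨h1, h2 | h2⟩ | ⟨h1, h2 | h2⟩
  · have e1 : a.1.val = b.1.val := by rw [h1]
    have e2 : a.2.val % 2 = (b.2.val + 1) % 2 := by
      rw [h2]; exact val_add_one_mod_two hn hn2 b.2
    omega
  · have e1 : a.1.val = b.1.val := by rw [h1]
    have e2 : b.2.val % 2 = (a.2.val + 1) % 2 := by
      rw [h2]; exact val_add_one_mod_two hn hn2 a.2
    omega
  · have e1 : a.2.val = b.2.val := by rw [h1]
    have e2 : a.1.val % 2 = (b.1.val + 1) % 2 := by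
      rw [h2]; exact val_add_one_mod_two hm hm2 b.1
    omega
  · have e1 : a.2.val = b.2.val := by rw [h1]
    have e2 : b.1.val % 2 = (a.1.val + 1) % 2 := by
      rw [h2]; exact val_add_one_mod_two hm hm2 a.1
    omega

lemma mem_rowEdges_iff {r : ZMod m} {e : Sym2 (TorV m n)} :
    e ∈ rowEdges m n r ↔ ∃ j : ZMod n, e = s((r, j), (r, j + 1)) := by
  simp [rowEdges, eq_comm]

lemma mem_colEdges_iff {c : ZMod n} {e : Sym2 (TorV m n)} :
    e ∈ colEdges m n c ↔ ∃ i : ZMod m, e = s((i, c), (i + 1, c)) := by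
  simp [colEdges, eq_comm]

lemma rowEdges_fst {r : ZMod m} {a b : TorV m n} (h : s(a, b) ∈ rowEdges m n r) :
    a.1 = r ∧ b.1 = r := by
  obtain ⟨j, hj⟩ := mem_rowEdges_iff.mp h
  rcases Sym2.eq_iff.mp hj with ⟨h1, h2⟩ | ⟨h1, h2⟩ <;>
    simp [Prod.ext_iff] at h1 h2 <;> exact ⟨h1.1, h2.1⟩

lemma colEdges_snd {c : ZMod n} {a b : TorV m n} (h : s(a, b) ∈ colEdges m n c) :
    a.2 = c ∧ b.2 = c := by
  obtain ⟨i, hi⟩ := mem_colEdges_iff.mp h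
  rcases Sym2.eq_iff.mp hi with ⟨h1, h2⟩ | ⟨h1, h2⟩ <;>
    simp [Prod.ext_iff] at h1 h2 <;> exact ⟨h1.2, h2.2⟩

lemma mem_rowEdges_of_adj (hm2 : 2 ≤ m) {r : ZMod m} {a b : TorV m n}
    (h : torAdj m n a b) (ha : a.1 = r) (hb : b.1 = r) : s(a, b) ∈ rowEdges m n r := by
  obtain ⟨a1, a2⟩ := a
  obtain ⟨b1, b2⟩ := b
  simp only [torAdj] at h ha hb
  subst ha hb
  rcases h with ⟨h1, h2 | h2⟩ | ⟨h1, h2 | h2⟩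
  · subst h2; exact mem_rowEdges_iff.mpr ⟨b2, Sym2.eq_swap⟩
  · subst h2; exact mem_rowEdges_iff.mpr ⟨a2, rfl⟩
  · exact absurd h2 (zmod_self_ne_add_one hm2 _)
  · exact absurd h2 (zmod_self_ne_add_one hm2 _)

lemma mem_colEdges_of_adj (hn2 : 2 ≤ n) {c : ZMod n} {a b : TorV m n}
    (h : torAdj m n a b) (ha : a.2 = c) (hb : b.2 = c) : s(a, b) ∈ colEdges m n c := by
  obtain ⟨a1, a2⟩ := a
  obtain ⟨b1, b2⟩ := b
  simp only [torAdj] at h ha hb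
  subst ha hb
  rcases h with ⟨h1, h2 | h2⟩ | ⟨h1, h2 | h2⟩
  · exact absurd h2 (zmod_self_ne_add_one hn2 _)
  · exact absurd h2 (zmod_self_ne_add_one hn2 _)
  · subst h2; exact mem_colEdges_iff.mpr ⟨b1, Sym2.eq_swap⟩
  · subst h2; exact mem_colEdges_iff.mpr ⟨a1, rfl⟩

end helpers

/-- if `M' = M ∆ U(C)` for a directed cycle `C` of `D_{m,n}(M)`,
then `M` and `M'` have the same number of horizontal edges in every row and the
same number of vertical edges in every column. -/
theorem symmDiff_cycle_preserves_row_col_counts (m n : ℕ) [NeZero m] [NeZero n]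
    (hm : Even m) (hn : Even n)
    (M : Finset (Sym2 (TorV m n))) (hM : IsPM m n M)
    (k : ℕ) (f : ℕ → TorV m n) (hc : IsDiCycle m n M k f) :
    (∀ i : ZMod m,
      (M ∩ rowEdges m n i).card = ((M ∆ cycEdges k f) ∩ rowEdges m n i).card) ∧
    (∀ j : ZMod n,
      (M ∩ colEdges m n j).card = ((M ∆ cycEdges k f) ∩ colEdges m n j).card) := by
  classical
  obtain ⟨hk, hinj, hper, harc⟩ := hc
  have hm2 : 2 ≤ m := by
    have := Nat.pos_of_ne_zero (NeZero.ne m); rcases hm with ⟨t, ht⟩; omega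
  have hn2 : 2 ≤ n := by
    have := Nat.pos_of_ne_zero (NeZero.ne n); rcases hn with ⟨t, ht⟩; omega
  have hadj : ∀ i, torAdj m n (f i) (f (i + 1)) := by
    intro i; rcases harc i with ⟨_, h, _⟩ | ⟨_, h, _⟩ <;> exact h
  have hne : ∀ i, f i ≠ f (i + 1) := fun i => torAdj_ne hm2 hn2 (hadj i)
  have hflip : ∀ i, IsBlack (f i) ↔ ¬ IsBlack (f (i + 1)) := fun i =>
    torAdj_black hm hn hm2 hn2 (hadj i)
  have hMg : ∀ i, s(f i, f (i + 1)) ∈ M ↔ IsBlack (f i) := by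
    intro i; rcases harc i with ⟨hb, _, hmem⟩ | ⟨hw, _, hnm, _⟩
    · exact iff_of_true hmem hb
    · exact iff_of_false hnm hw
  have hfmod : ∀ a, f a = f (a % k) := by
    intro a
    have base : ∀ q r, f (r + q * k) = f r := by
      intro q
      induction q with
      | zero => simp
      | succ q ih =>
        intro r
        have h2 : r + (q + 1) * k = (r + q * k) + k := by ring
        rw [h2, hper, ih]
    conv_lhs => rw [← Nat.mod_add_div' a k]
    exact base _ _
  have hfcong : ∀ a b, a % k = b % k → f a = f b := by
    intro a b h; rw [hfmod a, hfmod b, h]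
  have hgcong : ∀ a b, a % k = b % k → s(f a, f (a + 1)) = s(f b, f (b + 1)) := by
    intro a b h
    have h2 : (a + 1) % k = (b + 1) % k := by rw [Nat.add_mod, h, ← Nat.add_mod]
    rw [hfcong a b h, hfcong (a + 1) (b + 1) h2]
  have huniq : ∀ (e e' : Sym2 (TorV m n)) (v : TorV m n),
      e ∈ M → e' ∈ M → v ∈ e → v ∈ e' → e = e' := by
    intro e e' v he he' hv hv'
    obtain ⟨w, -, hw⟩ := hM.2 v
    rw [hw e ⟨he, hv⟩, hw e' ⟨he', hv'⟩]
  have hpair : ∀ i, IsBlack (f i) →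
      s(f i, f (i + 1)) ∈ M ∧ s(f (i + 1), f (i + 1 + 1)) ∉ M ∧
        Collin (f i) (f (i + 1)) (f (i + 1 + 1)) := by
    intro i hb
    have h1 : s(f i, f (i + 1)) ∈ M := (hMg i).mpr hb
    have hw : ¬ IsBlack (f (i + 1)) := (hflip i).mp hb
    rcases harc (i + 1) with ⟨hb', _, _⟩ | ⟨-, -, hnm, u, huM, hcol⟩
    · exact absurd hb' hw
    · refine ⟨h1, hnm, ?_⟩
      have he : s(u, f (i + 1)) = s(f i, f (i + 1)) :=
        huniq _ _ (f (i + 1)) huM h1 (Sym2.mem_mk_right _ _) (Sym2.mem_mk_right _ _)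
      rcases Sym2.eq_iff.mp he with ⟨h3, -⟩ | ⟨h3, h4⟩
      · rwa [h3] at hcol
      · exact absurd h4.symm (hne i)
  have hrow : ∀ (i : ℕ) (r : ZMod m), IsBlack (f i) →
      (s(f i, f (i + 1)) ∈ rowEdges m n r ↔
        s(f (i + 1), f (i + 1 + 1)) ∈ rowEdges m n r) := by
    intro i r hb
    obtain ⟨-, -, hcol⟩ := hpair i hb
    rcases hcol with ⟨h1, h2⟩ | ⟨h1, h2⟩
    · constructor
      · intro h
        have hr := (rowEdges_fst h).1
        exact mem_rowEdges_of_adj hm2 (hadj (i + 1)) (h1 ▸ hr) (h2 ▸ h1 ▸ hr)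
      · intro h
        have hr := (rowEdges_fst h).1
        exact mem_rowEdges_of_adj hm2 (hadj i) (h1.trans hr) hr
    · constructor
      · intro h
        exfalso
        have hr := rowEdges_fst h
        exact hne i (Prod.ext (hr.1.trans hr.2.symm) h1)
      · intro h
        exfalso
        have hr := rowEdges_fst h
        exact hne (i + 1) (Prod.ext (hr.1.trans hr.2.symm) h2)
  have hcolT : ∀ (i : ℕ) (c : ZMod n), IsBlack (f i) →
      (s(f i, f (i + 1)) ∈ colEdges m n c ↔
        s(f (i + 1), f (i + 1 + 1)) ∈ colEdges m n c) := by
    intro i c hb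
    obtain ⟨-, -, hcol⟩ := hpair i hb
    rcases hcol with ⟨h1, h2⟩ | ⟨h1, h2⟩
    · constructor
      · intro h
        exfalso
        have hr := colEdges_snd h
        exact hne i (Prod.ext h1 (hr.1.trans hr.2.symm))
      · intro h
        exfalso
        have hr := colEdges_snd h
        exact hne (i + 1) (Prod.ext h2 (hr.1.trans hr.2.symm))
    · constructor
      · intro h
        have hr := (colEdges_snd h).1
        exact mem_colEdges_of_adj hn2 (hadj (i + 1)) (h1 ▸ hr) (h2 ▸ h1 ▸ hr)
      · intro h
        have hr := (colEdges_snd h).1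
        exact mem_colEdges_of_adj hn2 (hadj i) (h1.trans hr) hr
  have hginj : ∀ i < k, ∀ j < k, s(f i, f (i + 1)) = s(f j, f (j + 1)) → i = j := by
    intro i hi j hj h
    rcases Sym2.eq_iff.mp h with ⟨h1, -⟩ | ⟨h1, h2⟩
    · exact hinj i hi j hj h1
    · exfalso
      have e1 : IsBlack (f i) ↔ IsBlack (f j) := by rw [← hMg i, ← hMg j, h]
      have e2 : IsBlack (f i) ↔ IsBlack (f (j + 1)) := by rw [h1]
      have e3 := hflip j
      tauto
  have key : ∀ R : Finset (Sym2 (TorV m n)),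
      (∀ i : ℕ, IsBlack (f i) →
        (s(f i, f (i + 1)) ∈ R ↔ s(f (i + 1), f (i + 1 + 1)) ∈ R)) →
      (M ∩ R).card = ((M ∆ cycEdges k f) ∩ R).card := by
    intro R htr
    set S := (Finset.range k).filter
      (fun i => s(f i, f (i + 1)) ∈ M ∧ s(f i, f (i + 1)) ∈ R) with hS
    set T := (Finset.range k).filter
      (fun i => s(f i, f (i + 1)) ∈ R ∧ s(f i, f (i + 1)) ∉ M) with hT
    have hST : S.card = T.card := by
      refine Finset.card_bij' (fun i _ => (i + 1) % k) (fun j _ => (j + (k - 1)) % k)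
        ?_ ?_ ?_ ?_
      · intro i hiS
        simp only [hS, Finset.mem_filter, Finset.mem_range] at hiS
        obtain ⟨hik, hiM, hiR⟩ := hiS
        have hb : IsBlack (f i) := (hMg i).mp hiM
        obtain ⟨-, hnm, -⟩ := hpair i hb
        have hg1 : s(f ((i + 1) % k), f ((i + 1) % k + 1)) = s(f (i + 1), f (i + 1 + 1)) :=
          hgcong _ _ (Nat.mod_mod_of_dvd _ (dvd_refl k))
        simp only [hT, Finset.mem_filter, Finset.mem_range]
        exact ⟨Nat.mod_lt _ hk, hg1 ▸ (htr i hb).mp hiR, hg1 ▸ hnm⟩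
      · intro j hjT
        simp only [hT, Finset.mem_filter, Finset.mem_range] at hjT
        obtain ⟨hjk, hjR, hjM⟩ := hjT
        have hik : ((j + (k - 1)) % k + 1) % k = j := by
          rw [Nat.mod_add_mod]
          have h2 : j + (k - 1) + 1 = j + k := by omega
          rw [h2, Nat.add_mod_right, Nat.mod_eq_of_lt hjk]
        have hfj : f ((j + (k - 1)) % k + 1) = f j :=
          hfcong _ _ (by rw [hik, Nat.mod_eq_of_lt hjk])
        have hgj : s(f ((j + (k - 1)) % k + 1), f ((j + (k - 1)) % k + 1 + 1))
            = s(f j, f (j + 1)) :=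
          hgcong _ _ (by rw [hik, Nat.mod_eq_of_lt hjk])
        have hb : IsBlack (f ((j + (k - 1)) % k)) := by
          have e1 := hflip ((j + (k - 1)) % k)
          rw [hfj] at e1
          have hwj : ¬ IsBlack (f j) := fun hb => hjM ((hMg j).mpr hb)
          tauto
        obtain ⟨hM1, -, -⟩ := hpair _ hb
        simp only [hS, Finset.mem_filter, Finset.mem_range]
        exact ⟨Nat.mod_lt _ hk, hM1, (htr _ hb).mpr (hgj ▸ hjR)⟩
      · intro i hiS
        simp only [hS, Finset.mem_filter, Finset.mem_range] at hiS
        show ((i + 1) % k + (k - 1)) % k = i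
        rw [Nat.mod_add_mod]
        have h2 : i + 1 + (k - 1) = i + k := by omega
        rw [h2, Nat.add_mod_right, Nat.mod_eq_of_lt hiS.1]
      · intro j hjT
        simp only [hT, Finset.mem_filter, Finset.mem_range] at hjT
        show ((j + (k - 1)) % k + 1) % k = j
        rw [Nat.mod_add_mod]
        have h2 : j + (k - 1) + 1 = j + k := by omega
        rw [h2, Nat.add_mod_right, Nat.mod_eq_of_lt hjT.1]
    have himg1 : (M ∩ R) ∩ cycEdges k f = S.image (fun i => s(f i, f (i + 1))) := by
      ext e
      simp only [Finset.mem_inter, cycEdges, Finset.mem_image, Finset.mem_filter,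
        Finset.mem_range, hS]
      constructor
      · rintro ⟨⟨h1, h2⟩, i, hik, rfl⟩
        exact ⟨i, ⟨hik, h1, h2⟩, rfl⟩
      · rintro ⟨i, ⟨hik, h1, h2⟩, rfl⟩
        exact ⟨⟨h1, h2⟩, i, hik, rfl⟩
    have himg2 : (cycEdges k f ∩ R) \ M = T.image (fun i => s(f i, f (i + 1))) := by
      ext e
      simp only [Finset.mem_sdiff, Finset.mem_inter, cycEdges, Finset.mem_image,
        Finset.mem_filter, Finset.mem_range, hT]
      constructor
      · rintro ⟨⟨⟨i, hik, rfl⟩, h2⟩, h3⟩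
        exact ⟨i, ⟨hik, h2, h3⟩, rfl⟩
      · rintro ⟨i, ⟨hik, h1, h2⟩, rfl⟩
        exact ⟨⟨⟨i, hik, rfl⟩, h1⟩, h2⟩
    have hinjS : Set.InjOn (fun i => s(f i, f (i + 1))) S := by
      intro i hi j hj h
      exact hginj i (Finset.mem_range.mp (Finset.mem_filter.mp hi).1)
        j (Finset.mem_range.mp (Finset.mem_filter.mp hj).1) h
    have hinjT : Set.InjOn (fun i => s(f i, f (i + 1))) T := by
      intro i hi j hj h
      exact hginj i (Finset.mem_range.mp (Finset.mem_filter.mp hi).1)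
        j (Finset.mem_range.mp (Finset.mem_filter.mp hj).1) h
    have hcard1 : ((M ∩ R) ∩ cycEdges k f).card = S.card := by
      rw [himg1, Finset.card_image_of_injOn hinjS]
    have hcard2 : ((cycEdges k f ∩ R) \ M).card = T.card := by
      rw [himg2, Finset.card_image_of_injOn hinjT]
    have hsplit : (M ∆ cycEdges k f) ∩ R =
        ((M ∩ R) \ cycEdges k f) ∪ ((cycEdges k f ∩ R) \ M) := by
      ext e
      simp only [Finset.mem_inter, Finset.mem_union, Finset.mem_sdiff, Finset.mem_symmDiff]
      tauto
    have hdisj : Disjoint ((M ∩ R) \ cycEdges k f) ((cycEdges k f ∩ R) \ M) := by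
      rw [Finset.disjoint_left]
      intro e he1 he2
      exact (Finset.mem_sdiff.mp he2).2 (Finset.mem_inter.mp (Finset.mem_sdiff.mp he1).1).1
    rw [hsplit, Finset.card_union_of_disjoint hdisj]
    have hsum := Finset.card_sdiff_add_card_inter (M ∩ R) (cycEdges k f)
    omega
  exact ⟨fun r => key (rowEdges m n r) (fun i hb => hrow i r hb),
    fun c => key (colEdges m n c) (fun i hb => hcolT i c hb)⟩
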